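/- arXiv:2005.12261 — 4 statements merged into one kernel-verified Lean document; each statement's English description precedes it below -/
import Mathlib

section
/- Let (X, μ) be a finite measure space and T a linear operator that is bounded on L²(X,μ) and maps L¹(X,μ) boundedly into weak-L¹(X,μ). Then T extends boundedly from the Zygmund space L log⁺ L(X,μ) to L¹(X,μ): there is C > 0 such that ‖Tf‖_{L¹} ≤ C‖f‖_{L log⁺ L} for all f with ∫ |f| log⁺|f| dμ < ∞. -/
/-!
By the layer-cake formula, `∫ |T h| = ∫₀^∞ μ {|T h| > λ} dλ`. For `λ ≤ 1` the integrand is at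
most `μ X`. For `λ > 1` split `h = h·1_{|h| ≤ λ} + h·1_{|h| > λ}`: Chebyshev and the `L²` bound
control the first part by `(4A²/λ²) ∫_{|h| ≤ λ} |h|²`, the weak `(1,1)` bound controls the second
by `(2B/λ) ∫_{|h| > λ} |h|`. Integrating in `λ` with Tonelli, `∫_{|h|}^∞ λ⁻² dλ = |h|⁻¹` and
`∫_1^{|h|} λ⁻¹ dλ = log⁺ |h|`, so `∫ |T h| ≤ μ X + 4A² ∫ |h| + 2B ∫ |h| log⁺ |h|`.
Since `s ≤ 1 + s log⁺ s`, this is bounded by a constant when `∫ |h| log⁺ |h| ≤ 1`, and applying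
it to `h = f / t` for every admissible `t` of the Luxemburg norm gives the theorem by linearity.
-/

open MeasureTheory ENNReal Set Real

lemma le_one_add_mul_posLog {s : ℝ} (hs : 0 ≤ s) : s ≤ 1 + s * log⁺ s := by
  rcases le_or_gt s 1 with hs1 | hs1
  · nlinarith [mul_nonneg hs (posLog_nonneg (x := s))]
  · have hlog := one_sub_inv_le_log_of_pos (by linarith : (0 : ℝ) < s)
    rw [posLog_eq_log (by rw [abs_of_nonneg hs]; exact hs1.le)]
    have : s * (1 - s⁻¹) = s - 1 := by field_simp
    nlinarith [mul_le_mul_of_nonneg_left hlog hs]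

lemma div_mul_posLog_div_le {s t : ℝ} (hs : 0 ≤ s) (ht : 1 ≤ t) :
    s / t * log⁺ (s / t) ≤ t⁻¹ * (s * log⁺ s) := by
  rw [div_eq_inv_mul, mul_assoc]
  gcongr
  rw [← div_eq_inv_mul]
  exact div_le_self hs ht

lemma lintegral_Ioi_rpow_neg_two {c : ℝ} (hc : 0 < c) :
    ∫⁻ t in Ioi c, ENNReal.ofReal (t ^ (-2 : ℝ)) = ENNReal.ofReal c⁻¹ := by
  rw [← ofReal_integral_eq_lintegral_ofReal (integrableOn_Ioi_rpow_of_lt (by norm_num) hc)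
    (ae_restrict_of_forall_mem measurableSet_Ioi fun t ht => rpow_nonneg (hc.trans ht).le _),
    integral_Ioi_rpow_of_lt (by norm_num) hc]
  norm_num [Real.rpow_neg_one]

lemma lintegral_Ioo_one_inv {s : ℝ} (hs : 1 ≤ s) :
    ∫⁻ t in Ioo 1 s, ENNReal.ofReal t⁻¹ = ENNReal.ofReal (log s) := by
  have hint : IntegrableOn (fun t : ℝ => t⁻¹) (Ioc 1 s) :=
    (intervalIntegrable_iff_integrableOn_Ioc_of_le hs).mp
      (intervalIntegral.intervalIntegrable_inv (fun t ht => by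
        rw [uIcc_of_le hs] at ht; linarith [ht.1]) continuousOn_id)
  rw [setLIntegral_congr Ioo_ae_eq_Ioc, ← ofReal_integral_eq_lintegral_ofReal hint
    (ae_restrict_of_forall_mem measurableSet_Ioc fun t ht =>
      inv_nonneg.mpr (by linarith [ht.1])),
    ← intervalIntegral.integral_of_le hs, integral_inv_of_pos one_pos (by linarith), div_one]

lemma lintegral_Ioi_rpow_neg_two_mul_ite_le {s : ℝ} (hs : 0 ≤ s) :
    ∫⁻ t in Ioi 0, ENNReal.ofReal (t ^ (-2 : ℝ)) * (if s ≤ t then ENNReal.ofReal s ^ 2 else 0)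
      = ENNReal.ofReal s := by
  rcases hs.eq_or_lt with rfl | hs
  · simp
  have hsupp : ∀ t ∈ Ioi (0 : ℝ),
      ENNReal.ofReal (t ^ (-2 : ℝ)) * (if s ≤ t then ENNReal.ofReal s ^ 2 else 0)
        = (Ici s).indicator
            (fun t => ENNReal.ofReal s ^ 2 * ENNReal.ofReal (t ^ (-2 : ℝ))) t := by
    intro t _
    by_cases hst : s ≤ t <;> simp [hst, mul_comm]
  rw [setLIntegral_congr_fun measurableSet_Ioi hsupp, lintegral_indicator measurableSet_Ici,
    Measure.restrict_restrict measurableSet_Ici, inter_eq_left.mpr (Ici_subset_Ioi.mpr hs),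
    setLIntegral_congr Ioi_ae_eq_Ici.symm, lintegral_const_mul _ (by fun_prop),
    lintegral_Ioi_rpow_neg_two hs, ← ENNReal.ofReal_pow hs.le,
    ← ENNReal.ofReal_mul (by positivity)]
  congr 1
  field_simp

lemma lintegral_Ioi_one_inv_mul_ite_lt {s : ℝ} (hs : 0 ≤ s) :
    ∫⁻ t in Ioi 1, ENNReal.ofReal t⁻¹ * (if t < s then ENNReal.ofReal s else 0)
      = ENNReal.ofReal (s * log⁺ s) := by
  rcases le_or_gt s 1 with hs1 | hs1
  · rw [(posLog_eq_zero_iff s).mpr (abs_le.mpr ⟨by linarith, hs1⟩), mul_zero,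
      ENNReal.ofReal_zero]
    refine setLIntegral_eq_zero measurableSet_Ioi fun t (ht : 1 < t) => ?_
    simp [not_lt.mpr (hs1.trans ht.le)]
  have hsupp : ∀ t ∈ Ioi (1 : ℝ),
      ENNReal.ofReal t⁻¹ * (if t < s then ENNReal.ofReal s else 0)
        = (Iio s).indicator (fun t => ENNReal.ofReal s * ENNReal.ofReal t⁻¹) t := by
    intro t _
    by_cases hst : t < s <;> simp [hst, mul_comm]
  rw [setLIntegral_congr_fun measurableSet_Ioi hsupp, lintegral_indicator measurableSet_Iio,
    Measure.restrict_restrict measurableSet_Iio, Iio_inter_Ioi,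
    lintegral_const_mul _ (by fun_prop),
    lintegral_Ioo_one_inv hs1.le, posLog_eq_log (by rw [abs_of_nonneg hs]; exact hs1.le),
    ENNReal.ofReal_mul hs]

lemma le_ofReal_mul_csInf {L : ℝ≥0∞} {C : ℝ} (hC : 0 < C) {S : Set ℝ} (hne : S.Nonempty)
    (hS : ∀ t ∈ S, 0 ≤ t) (hL : ∀ t ∈ S, L ≤ ENNReal.ofReal (C * t)) :
    L ≤ ENNReal.ofReal (C * sInf S) := by
  obtain ⟨t₀, ht₀⟩ := hne
  have hLtop : L ≠ ∞ := ne_top_of_le_ne_top ENNReal.ofReal_ne_top (hL t₀ ht₀)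
  rw [ENNReal.le_ofReal_iff_toReal_le hLtop (mul_nonneg hC.le (Real.sInf_nonneg hS)),
    ← div_le_iff₀' hC]
  exact le_csInf ⟨t₀, ht₀⟩ fun t ht =>
    (div_le_iff₀' hC).mpr (ENNReal.toReal_le_of_le_ofReal (mul_nonneg hC.le (hS t ht)) (hL t ht))

section

variable {X : Type*} [MeasurableSpace X] {μ : Measure X}

lemma lintegral_ofReal_abs_le_measure_add (f : X → ℝ) :
    ∫⁻ x, ENNReal.ofReal |f x| ∂μ
      ≤ μ univ + ∫⁻ x, ENNReal.ofReal (|f x| * log⁺ |f x|) ∂μ := by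
  calc ∫⁻ x, ENNReal.ofReal |f x| ∂μ
      ≤ ∫⁻ x, (1 + ENNReal.ofReal (|f x| * log⁺ |f x|)) ∂μ := lintegral_mono fun x => by
        rw [← ENNReal.ofReal_one, ← ENNReal.ofReal_add zero_le_one
          (mul_nonneg (abs_nonneg _) posLog_nonneg)]
        exact ENNReal.ofReal_le_ofReal (le_one_add_mul_posLog (abs_nonneg _))
    _ = μ univ + ∫⁻ x, ENNReal.ofReal (|f x| * log⁺ |f x|) ∂μ := by
        rw [lintegral_add_left measurable_const, lintegral_const, one_mul]

lemma exists_pos_lintegral_div_mul_posLog_le_one {f : X → ℝ}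
    (hf : ∫⁻ x, ENNReal.ofReal (|f x| * log⁺ |f x|) ∂μ < ∞) :
    ∃ t : ℝ, 0 < t ∧ ∫⁻ x, ENNReal.ofReal (|f x| / t * log⁺ (|f x| / t)) ∂μ ≤ 1 := by
  set I := ∫⁻ x, ENNReal.ofReal (|f x| * log⁺ |f x|) ∂μ
  set t := max 1 I.toReal
  have ht : 1 ≤ t := le_max_left _ _
  refine ⟨t, zero_lt_one.trans_le ht, ?_⟩
  calc ∫⁻ x, ENNReal.ofReal (|f x| / t * log⁺ (|f x| / t)) ∂μ
      ≤ ∫⁻ x, ENNReal.ofReal t⁻¹ * ENNReal.ofReal (|f x| * log⁺ |f x|) ∂μ :=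
        lintegral_mono fun x => by
          rw [← ENNReal.ofReal_mul (by positivity)]
          exact ENNReal.ofReal_le_ofReal (div_mul_posLog_div_le (abs_nonneg _) ht)
    _ = ENNReal.ofReal t⁻¹ * I := lintegral_const_mul' _ _ ENNReal.ofReal_ne_top
    _ ≤ ENNReal.ofReal t⁻¹ * ENNReal.ofReal t := by
        gcongr
        exact (ENNReal.ofReal_toReal hf.ne).symm.trans_le
          (ENNReal.ofReal_le_ofReal (le_max_right _ _))
    _ = 1 := by
        rw [← ENNReal.ofReal_mul (by positivity), inv_mul_cancel₀ (by positivity),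
          ENNReal.ofReal_one]

lemma setLIntegral_rpow_neg_two_mul_lintegral_trunc_sq [SFinite μ] {f : X → ℝ}
    (hf : Measurable f) :
    ∫⁻ t in Ioi 0, ENNReal.ofReal (t ^ (-2 : ℝ)) *
        ∫⁻ x, (if |f x| ≤ t then ENNReal.ofReal |f x| ^ 2 else 0) ∂μ
      = ∫⁻ x, ENNReal.ofReal |f x| ∂μ := by
  simp_rw [← lintegral_const_mul' _ _ ENNReal.ofReal_ne_top]
  rw [lintegral_lintegral_swap]
  · exact lintegral_congr fun x => lintegral_Ioi_rpow_neg_two_mul_ite_le (abs_nonneg _)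
  · refine Measurable.aemeasurable ?_
    refine (measurable_fst.pow_const _).ennreal_ofReal.mul (Measurable.ite ?_ ?_ measurable_const)
    · exact measurableSet_le (hf.comp measurable_snd).abs measurable_fst
    · exact (hf.comp measurable_snd).abs.ennreal_ofReal.pow_const _

lemma setLIntegral_inv_mul_lintegral_tail [SFinite μ] {f : X → ℝ} (hf : Measurable f) :
    ∫⁻ t in Ioi 1, ENNReal.ofReal t⁻¹ *
        ∫⁻ x, (if t < |f x| then ENNReal.ofReal |f x| else 0) ∂μ
      = ∫⁻ x, ENNReal.ofReal (|f x| * log⁺ |f x|) ∂μ := by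
  simp_rw [← lintegral_const_mul' _ _ ENNReal.ofReal_ne_top]
  rw [lintegral_lintegral_swap]
  · exact lintegral_congr fun x => lintegral_Ioi_one_inv_mul_ite_lt (abs_nonneg _)
  · refine Measurable.aemeasurable ?_
    refine measurable_fst.inv.ennreal_ofReal.mul (Measurable.ite ?_ ?_ measurable_const)
    · exact measurableSet_lt measurable_fst (hf.comp measurable_snd).abs
    · exact (hf.comp measurable_snd).abs.ennreal_ofReal

lemma meas_lt_abs_add_le (u v : X → ℝ) (t : ℝ) :
    μ {x | t < |u x + v x|} ≤ μ {x | t / 2 < |u x|} + μ {x | t / 2 < |v x|} := by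
  refine (measure_mono fun x (hx : t < |u x + v x|) => ?_).trans (measure_union_le _ _)
  by_contra! hx'
  simp only [mem_union, mem_ofPred_eq, not_or, not_lt] at hx'
  linarith [abs_add_le (u x) (v x)]

lemma lintegral_abs_apply_eq_mul_lintegral_abs_apply_div {T : (X → ℝ) → (X → ℝ)}
    (hlin : IsLinearMap ℝ T) (f : X → ℝ) {t : ℝ} (ht : 0 < t) :
    ∫⁻ x, ENNReal.ofReal |T f x| ∂μ
      = ENNReal.ofReal t * ∫⁻ x, ENNReal.ofReal |T (fun x => f x / t) x| ∂μ := by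
  have hscale : T (fun x => f x / t) = t⁻¹ • T f := by
    rw [← hlin.map_smul]
    congr 1
    ext x
    simp [div_eq_inv_mul]
  rw [← lintegral_const_mul' _ _ ENNReal.ofReal_ne_top]
  refine lintegral_congr fun x => ?_
  rw [hscale, ← ENNReal.ofReal_mul ht.le, Pi.smul_apply, smul_eq_mul, abs_mul,
    abs_of_pos (inv_pos.mpr ht), mul_inv_cancel_left₀ ht.ne']

lemma eLpNorm_two_sq (f : X → ℝ) :
    eLpNorm f 2 μ ^ 2 = ∫⁻ x, ENNReal.ofReal |f x| ^ 2 ∂μ := by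
  have := eLpNorm_nnreal_pow_eq_lintegral (f := f) (μ := μ) (p := 2) two_ne_zero
  simpa [← Real.enorm_eq_ofReal_abs] using this

def IsL2Bounded (μ : Measure X) (T : (X → ℝ) → (X → ℝ)) (A : ℝ) : Prop :=
  ∀ g : X → ℝ, MemLp g 2 μ → eLpNorm (T g) 2 μ ≤ ENNReal.ofReal A * eLpNorm g 2 μ

def IsWeakTypeOneOne (μ : Measure X) (T : (X → ℝ) → (X → ℝ)) (B : ℝ) : Prop :=
  ∀ g : X → ℝ, Integrable g μ → ∀ l : ℝ, 0 < l →
    ENNReal.ofReal l * μ {x | l < |T g x|} ≤ ENNReal.ofReal (B * ∫ x, |g x| ∂μ)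

variable {T : (X → ℝ) → (X → ℝ)} {A B : ℝ}

lemma IsL2Bounded.meas_lt_abs_le (hL2 : IsL2Bounded μ T A)
    (hTmeas : ∀ f, Measurable f → Measurable (T f)) {g : X → ℝ} (hgm : Measurable g)
    (hg : MemLp g 2 μ) {c : ℝ} (hc : 0 < c) :
    μ {x | c < |T g x|}
      ≤ ENNReal.ofReal (c ^ (-2 : ℝ)) *
          (ENNReal.ofReal A ^ 2 * ∫⁻ x, ENNReal.ofReal |g x| ^ 2 ∂μ) := by
  have hc2 : ENNReal.ofReal (c ^ (-2 : ℝ)) = (ENNReal.ofReal (c ^ 2))⁻¹ := by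
    rw [Real.rpow_neg hc.le, ENNReal.ofReal_inv_of_pos (by positivity), Real.rpow_two]
  have hsub : {x | c < |T g x|} ⊆ {x | ENNReal.ofReal (c ^ 2) ≤ ENNReal.ofReal |T g x| ^ 2} :=
    fun x (hx : c < |T g x|) => by
      show ENNReal.ofReal (c ^ 2) ≤ ENNReal.ofReal |T g x| ^ 2
      rw [← ENNReal.ofReal_pow (abs_nonneg _)]
      exact ENNReal.ofReal_le_ofReal (pow_le_pow_left₀ hc.le hx.le 2)
  have hmarkov := mul_meas_ge_le_lintegral₀
    ((hTmeas g hgm).abs.ennreal_ofReal.pow_const 2).aemeasurable (ENNReal.ofReal (c ^ 2)) (μ := μ)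
  have hL2sq : eLpNorm (T g) 2 μ ^ 2 ≤ (ENNReal.ofReal A * eLpNorm g 2 μ) ^ 2 :=
    pow_le_pow_left' (hL2 g hg) 2
  rw [mul_pow, eLpNorm_two_sq, eLpNorm_two_sq] at hL2sq
  calc μ {x | c < |T g x|}
      = (ENNReal.ofReal (c ^ 2))⁻¹ * (ENNReal.ofReal (c ^ 2) * μ {x | c < |T g x|}) :=
        (ENNReal.inv_mul_cancel_left (by simpa using hc.ne') ENNReal.ofReal_ne_top).symm
    _ ≤ _ := by
        rw [hc2]
        exact mul_le_mul_right ((mul_le_mul_right (measure_mono hsub) _).trans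
          (hmarkov.trans hL2sq)) _

lemma IsWeakTypeOneOne.meas_lt_abs_le (hweak : IsWeakTypeOneOne μ T B) {b : X → ℝ}
    (hb : Integrable b μ) {c : ℝ} (hc : 0 < c) :
    μ {x | c < |T b x|}
      ≤ ENNReal.ofReal c⁻¹ * (ENNReal.ofReal B * ∫⁻ x, ENNReal.ofReal |b x| ∂μ) := by
  have hw := hweak b hb c hc
  rw [ENNReal.ofReal_mul' (integral_nonneg fun x => abs_nonneg _),
    ofReal_integral_eq_lintegral_ofReal hb.abs (ae_of_all _ fun x => abs_nonneg _)] at hw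
  calc μ {x | c < |T b x|}
      = (ENNReal.ofReal c)⁻¹ * (ENNReal.ofReal c * μ {x | c < |T b x|}) :=
        (ENNReal.inv_mul_cancel_left (by simpa using hc) ENNReal.ofReal_ne_top).symm
    _ ≤ _ := by
        rw [ENNReal.ofReal_inv_of_pos hc]
        gcongr

lemma meas_lt_abs_apply_le [IsFiniteMeasure μ] (hlin : IsLinearMap ℝ T)
    (hTmeas : ∀ f, Measurable f → Measurable (T f)) (hL2 : IsL2Bounded μ T A)
    (hweak : IsWeakTypeOneOne μ T B) {h : X → ℝ} (hm : Measurable h) (hint : Integrable h μ)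
    {t : ℝ} (ht : 0 < t) :
    μ {x | t < |T h x|}
      ≤ 4 * ENNReal.ofReal A ^ 2 * (ENNReal.ofReal (t ^ (-2 : ℝ)) *
          ∫⁻ x, (if |h x| ≤ t then ENNReal.ofReal |h x| ^ 2 else 0) ∂μ)
        + 2 * ENNReal.ofReal B * (ENNReal.ofReal t⁻¹ *
          ∫⁻ x, (if t < |h x| then ENNReal.ofReal |h x| else 0) ∂μ) := by
  set g : X → ℝ := fun x => if |h x| ≤ t then h x else 0
  set b : X → ℝ := fun x => if t < |h x| then h x else 0
  have hsplit : ∀ x, T h x = T g x + T b x := by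
    have : h = g + b := funext fun x => by
      simp only [g, b, Pi.add_apply]
      split_ifs <;> first | (exfalso; linarith) | ring
    simp [this, hlin.map_add]
  have hgm : Measurable g :=
    Measurable.ite (measurableSet_le hm.abs measurable_const) hm measurable_const
  have hbm : Measurable b :=
    Measurable.ite (measurableSet_lt measurable_const hm.abs) hm measurable_const
  have hg : MemLp g 2 μ := MemLp.of_bound hgm.aestronglyMeasurable t <| ae_of_all _ fun x => by
    simp only [g, Real.norm_eq_abs]; split_ifs <;> simp [*, ht.le]
  have hb : Integrable b μ := hint.mono hbm.aestronglyMeasurable <| ae_of_all _ fun x => by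
    simp only [b, Real.norm_eq_abs]; split_ifs <;> simp
  have hgsq :
      ∀ x, ENNReal.ofReal |g x| ^ 2 = if |h x| ≤ t then ENNReal.ofReal |h x| ^ 2 else 0 :=
    fun x => by simp only [g]; split_ifs <;> simp
  have hbabs : ∀ x, ENNReal.ofReal |b x| = if t < |h x| then ENNReal.ofReal |h x| else 0 :=
    fun x => by simp only [b]; split_ifs <;> simp
  have hhalf_sq : ENNReal.ofReal ((t / 2) ^ (-2 : ℝ)) = 4 * ENNReal.ofReal (t ^ (-2 : ℝ)) := by
    rw [Real.div_rpow ht.le zero_le_two, div_eq_mul_inv, ← Real.rpow_neg zero_le_two, neg_neg,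
      ENNReal.ofReal_mul (by positivity), mul_comm]
    norm_num
  have hhalf : ENNReal.ofReal (t / 2)⁻¹ = 2 * ENNReal.ofReal t⁻¹ := by
    rw [inv_div, div_eq_mul_inv, ENNReal.ofReal_mul zero_le_two, ENNReal.ofReal_ofNat]
  calc μ {x | t < |T h x|}
      ≤ μ {x | t / 2 < |T g x|} + μ {x | t / 2 < |T b x|} := by
        simpa only [hsplit] using meas_lt_abs_add_le (T g) (T b) t
    _ ≤ _ := add_le_add (hL2.meas_lt_abs_le hTmeas hgm hg (half_pos ht))
        (hweak.meas_lt_abs_le hb (half_pos ht))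
    _ = _ := by
        simp only [hgsq, hbabs, hhalf_sq, hhalf]
        ring

lemma lintegral_abs_apply_le [IsFiniteMeasure μ] (hlin : IsLinearMap ℝ T)
    (hTmeas : ∀ f, Measurable f → Measurable (T f)) (hL2 : IsL2Bounded μ T A)
    (hweak : IsWeakTypeOneOne μ T B) {h : X → ℝ} (hm : Measurable h) (hint : Integrable h μ) :
    ∫⁻ x, ENNReal.ofReal |T h x| ∂μ
      ≤ μ univ + 4 * ENNReal.ofReal A ^ 2 * ∫⁻ x, ENNReal.ofReal |h x| ∂μ
        + 2 * ENNReal.ofReal B * ∫⁻ x, ENNReal.ofReal (|h x| * log⁺ |h x|) ∂μ := by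
  set G : ℝ → ℝ≥0∞ := fun t => ENNReal.ofReal (t ^ (-2 : ℝ)) *
    ∫⁻ x, (if |h x| ≤ t then ENNReal.ofReal |h x| ^ 2 else 0) ∂μ
  set D : ℝ → ℝ≥0∞ := fun t => ENNReal.ofReal t⁻¹ *
    ∫⁻ x, (if t < |h x| then ENNReal.ofReal |h x| else 0) ∂μ
  have hGm : Measurable G := by
    refine (by fun_prop : Measurable fun t : ℝ => ENNReal.ofReal (t ^ (-2 : ℝ))).mul
      (Monotone.measurable fun s t hst => lintegral_mono fun x => ?_)
    split_ifs <;> first | exact le_rfl | exact bot_le | (exfalso; linarith)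
  calc ∫⁻ x, ENNReal.ofReal |T h x| ∂μ
      = ∫⁻ t in Ioi 0, μ {x | t < |T h x|} :=
        lintegral_eq_lintegral_meas_lt μ (ae_of_all _ fun x => abs_nonneg _)
          (hTmeas h hm).abs.aemeasurable
    _ = (∫⁻ t in Ioc 0 1, μ {x | t < |T h x|}) + ∫⁻ t in Ioi 1, μ {x | t < |T h x|} := by
        rw [← Ioc_union_Ioi_eq_Ioi zero_le_one, lintegral_union measurableSet_Ioi
          Ioc_disjoint_Ioi_same]
    _ ≤ (∫⁻ t in Ioc 0 1, μ univ)
          + ∫⁻ t in Ioi 1, (4 * ENNReal.ofReal A ^ 2 * G t + 2 * ENNReal.ofReal B * D t) :=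
        add_le_add (lintegral_mono fun t => measure_mono (subset_univ _))
          (setLIntegral_mono' measurableSet_Ioi fun t ht =>
            meas_lt_abs_apply_le hlin hTmeas hL2 hweak hm hint (zero_lt_one.trans ht))
    _ = μ univ + 4 * ENNReal.ofReal A ^ 2 * (∫⁻ t in Ioi 1, G t)
          + 2 * ENNReal.ofReal B * ∫⁻ t in Ioi 1, D t := by
        rw [setLIntegral_const, Real.volume_Ioc, lintegral_add_left (hGm.const_mul _),
          lintegral_const_mul' _ _ (by finiteness), lintegral_const_mul' _ _ (by finiteness)]
        simp [add_assoc]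
    _ ≤ μ univ + 4 * ENNReal.ofReal A ^ 2 * (∫⁻ t in Ioi 0, G t)
          + 2 * ENNReal.ofReal B * ∫⁻ t in Ioi 1, D t := by
        gcongr
        exact zero_le_one
    _ = _ := by
        rw [setLIntegral_rpow_neg_two_mul_lintegral_trunc_sq hm,
          setLIntegral_inv_mul_lintegral_tail hm]

lemma lintegral_abs_apply_le_of_lintegral_le_one [IsFiniteMeasure μ] (hlin : IsLinearMap ℝ T)
    (hTmeas : ∀ f, Measurable f → Measurable (T f)) (hL2 : IsL2Bounded μ T A)
    (hweak : IsWeakTypeOneOne μ T B) {h : X → ℝ} (hm : Measurable h)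
    (hΨ : ∫⁻ x, ENNReal.ofReal (|h x| * log⁺ |h x|) ∂μ ≤ 1) :
    ∫⁻ x, ENNReal.ofReal |T h x| ∂μ
      ≤ μ univ + 4 * ENNReal.ofReal A ^ 2 * (μ univ + 1) + 2 * ENNReal.ofReal B := by
  have hL1 : ∫⁻ x, ENNReal.ofReal |h x| ∂μ ≤ μ univ + 1 :=
    (lintegral_ofReal_abs_le_measure_add h).trans (by gcongr)
  have hint : Integrable h μ := by
    refine ⟨hm.aestronglyMeasurable, (hasFiniteIntegral_iff_norm h).mpr ?_⟩
    simpa only [Real.norm_eq_abs] using hL1.trans_lt (by finiteness)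
  calc _ ≤ _ := lintegral_abs_apply_le hlin hTmeas hL2 hweak hm hint
    _ ≤ μ univ + 4 * ENNReal.ofReal A ^ 2 * (μ univ + 1) + 2 * ENNReal.ofReal B * 1 := by
        gcongr
    _ = _ := by rw [mul_one]

end

theorem stmt1_general {X : Type*} [MeasurableSpace X] (μ : Measure X) [IsFiniteMeasure μ]
    (T : (X → ℝ) → (X → ℝ)) (hlin : IsLinearMap ℝ T)
    (hTmeas : ∀ f, Measurable f → Measurable (T f))
    (A : ℝ)
    (hL2 : ∀ g : X → ℝ, MemLp g 2 μ →
      eLpNorm (T g) 2 μ ≤ ENNReal.ofReal A * eLpNorm g 2 μ)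
    (B : ℝ)
    (hweak : ∀ g : X → ℝ, Integrable g μ → ∀ l : ℝ, 0 < l →
      ENNReal.ofReal l * μ {x | l < |T g x|} ≤ ENNReal.ofReal (B * ∫ x, |g x| ∂μ)) :
    ∃ C : ℝ, 0 < C ∧ ∀ f : X → ℝ, Measurable f →
      (∫⁻ x, ENNReal.ofReal (|f x| * max (Real.log |f x|) 0) ∂μ) < ∞ →
      ∫⁻ x, ENNReal.ofReal |T f x| ∂μ ≤ ENNReal.ofReal (C *
        sInf {t : ℝ | 0 < t ∧
          ∫⁻ x, ENNReal.ofReal ((|f x| / t) * max (Real.log (|f x| / t)) 0) ∂μ ≤ 1}) := by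
  have hmax : ∀ s, max (Real.log s) 0 = log⁺ s := fun s => max_comm _ _
  simp only [hmax]
  set K := μ univ + 4 * ENNReal.ofReal A ^ 2 * (μ univ + 1) + 2 * ENNReal.ofReal B
  refine ⟨K.toReal + 1, by positivity, fun f hf hfin => ?_⟩
  refine le_ofReal_mul_csInf (by positivity) (exists_pos_lintegral_div_mul_posLog_le_one hfin)
    (fun t ht => ht.1.le) fun t ⟨ht, htΨ⟩ => ?_
  calc ∫⁻ x, ENNReal.ofReal |T f x| ∂μ
      = ENNReal.ofReal t * ∫⁻ x, ENNReal.ofReal |T (fun x => f x / t) x| ∂μ :=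
        lintegral_abs_apply_eq_mul_lintegral_abs_apply_div hlin f ht
    _ ≤ ENNReal.ofReal t * ENNReal.ofReal (K.toReal + 1) := by
        gcongr
        refine (lintegral_abs_apply_le_of_lintegral_le_one hlin hTmeas hL2 hweak
          (hf.div_const t) ?_).trans ?_
        · simpa [abs_div, abs_of_pos ht] using htΨ
        · exact (ENNReal.ofReal_toReal (by finiteness)).symm.trans_le
            (ENNReal.ofReal_le_ofReal (le_add_of_nonneg_right zero_le_one))
    _ = ENNReal.ofReal ((K.toReal + 1) * t) := by
        rw [← ENNReal.ofReal_mul ht.le, mul_comm]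

/-- Zygmund inequality: L² boundedness plus weak-type (1,1) imply
L log⁺ L → L¹ boundedness on a finite measure space; the L log⁺ L norm is
the Luxemburg norm for the Young function Ψ(t) = t·log⁺ t. -/
theorem stmt1 {X : Type*} [MeasurableSpace X] (μ : Measure X) [IsFiniteMeasure μ]
    (T : (X → ℝ) → (X → ℝ)) (hlin : IsLinearMap ℝ T)
    (hTmeas : ∀ f, Measurable f → Measurable (T f))
    (A : ℝ) (hA : 0 < A)
    (hL2 : ∀ g : X → ℝ, MemLp g 2 μ →
      eLpNorm (T g) 2 μ ≤ ENNReal.ofReal A * eLpNorm g 2 μ)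
    (B : ℝ) (hB : 0 < B)
    (hweak : ∀ g : X → ℝ, Integrable g μ → ∀ l : ℝ, 0 < l →
      ENNReal.ofReal l * μ {x | l < |T g x|} ≤ ENNReal.ofReal (B * ∫ x, |g x| ∂μ)) :
    ∃ C : ℝ, 0 < C ∧ ∀ f : X → ℝ, Measurable f →
      (∫⁻ x, ENNReal.ofReal (|f x| * max (Real.log |f x|) 0) ∂μ) < ∞ →
      ∫⁻ x, ENNReal.ofReal |T f x| ∂μ ≤ ENNReal.ofReal (C *
        sInf {t : ℝ | 0 < t ∧
          ∫⁻ x, ENNReal.ofReal ((|f x| / t) * max (Real.log (|f x| / t)) 0) ∂μ ≤ 1}) :=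
  stmt1_general μ T hlin hTmeas A hL2 B hweak
end

section
/- Let (X, μ) be a positive measure space and k : X × X → ℝ a measurable kernel with M := ‖∫_X k(x, ·) dμ(x)‖_{L^∞(X,μ)} < ∞ (i.e., the function y ↦ ∫|k(x,y)| dμ(x) is essentially bounded). If the family {k_y : y ∈ X}, where k_y(x) = k(x,y), is relatively compact in L¹(X,μ), then the integral operator Kf(x) = ∫_X k(x,y) f(y) dμ(y) is a compact operator on L¹(X,μ). -/
/-!
For `ε > 0`, compactness of `{k_y}` yields finitely many points `z` such that every `k_y` is
`ε`-close in `L¹` to some `k_z`; choosing such a `z = σ y` measurably in `y`, with `σ` taking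
finitely many values, the integral operator with kernel `(x, y) ↦ k(x, σ y)` has finite rank.
By Tonelli, the `L¹` operator norm of an integral operator is at most `sup_y ‖k(·, y)‖₁`, so this
finite rank operator is `ε`-close to `T`, and `T` is a norm limit of compact operators.

The measure need not be σ-finite. Tonelli still applies after restricting to σ-finite sets
carrying the `L¹` functions involved, and the separability of `{k_y}` provides one σ-finite set
carrying the whole family, which makes `y ↦ ‖k_y - k_z‖₁` measurable.
-/

open MeasureTheory ENNReal
open Set Filter Function

namespace MeasureTheory

variable {α β γ : Type*} [MeasurableSpace α] {μ : Measure α}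

theorem sFinite_restrict_iUnion {ι : Type*} [Countable ι] {s : ι → Set α}
    (h : ∀ i, SFinite (μ.restrict (s i))) : SFinite (μ.restrict (⋃ i, s i)) :=
  sFinite_of_absolutelyContinuous (ν := Measure.sum fun i => μ.restrict (s i))
    (Measure.absolutelyContinuous_of_le Measure.restrict_iUnion_le)

theorem Lp.coeFn_finset_sum {E : Type*} [NormedAddCommGroup E] {p : ℝ≥0∞} {ι : Type*}
    (s : Finset ι) (f : ι → Lp E p μ) : ⇑(∑ i ∈ s, f i) =ᵐ[μ] ∑ i ∈ s, ⇑(f i) := by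
  classical
  induction s using Finset.induction_on with
  | empty => simpa using Lp.coeFn_zero E p μ
  | insert a s ha ih =>
    simp only [Finset.sum_insert ha]
    exact (Lp.coeFn_add _ _).trans (EventuallyEq.rfl.add ih)

theorem Lp.exists_sFinite_carrier_of_isSeparable {E : Type*} [NormedAddCommGroup E]
    [NormedSpace ℝ E] {p : ℝ≥0∞} [Fact (1 ≤ p)] (hp : p ≠ ∞) {s : Set (Lp E p μ)}
    (hs : TopologicalSpace.IsSeparable s) :
    ∃ t, MeasurableSet t ∧ SFinite (μ.restrict t) ∧
      ∀ g ∈ s, (g : α → E) =ᵐ[μ.restrict tᶜ] 0 := by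
  obtain ⟨c, -, hc, hsc⟩ := hs.exists_countable_dense_subset
  have hp0 : p ≠ 0 := (zero_lt_one.trans_le Fact.out).ne'
  have hfin (g : c) : AEFinStronglyMeasurable (g : α → E) μ :=
    (Lp.memLp (g : Lp E p μ)).aefinStronglyMeasurable hp0 hp
  have := hc.to_subtype
  set t := ⋃ g : c, (hfin g).sigmaFiniteSet
  refine ⟨t, .iUnion fun g => (hfin g).measurableSet,
    sFinite_restrict_iUnion fun _ => inferInstance, ?_⟩
  have hzero_iff (g : Lp E p μ) :
      LpToLpRestrictCLM α E ℝ μ p tᶜ g = 0 ↔ (g : α → E) =ᵐ[μ.restrict tᶜ] 0 := by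
    rw [Lp.eq_zero_iff_ae_eq_zero]
    exact (LpToLpRestrictCLM_coeFn ℝ tᶜ g).congr_left
  have hclosed : IsClosed {g : Lp E p μ | LpToLpRestrictCLM α E ℝ μ p tᶜ g = 0} :=
    isClosed_eq (ContinuousLinearMap.continuous _) continuous_const
  intro g hg
  refine (hzero_iff g).1 (hclosed.closure_subset_iff.2 (fun g' hg' => ?_) (hsc hg))
  refine (hzero_iff g').2
    (ae_restrict_of_ae_restrict_of_subset ?_ (hfin ⟨g', hg'⟩).ae_eq_zero_compl)
  exact compl_subset_compl.2 (subset_iUnion (fun g : c => (hfin g).sigmaFiniteSet) ⟨g', hg'⟩)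

theorem SimpleFunc.exists_forall_mem_of_finset_cover {U : γ → Set α}
    (hU : ∀ c, MeasurableSet (U c)) (t : Finset γ) (hcover : ∀ a, ∃ c ∈ t, a ∈ U c) :
    ∃ σ : SimpleFunc α γ, ∀ a, a ∈ U (σ a) := by
  classical
  rcases isEmpty_or_nonempty α with hα | hα
  · exact ⟨ofIsEmpty, isEmptyElim⟩
  obtain ⟨a₀⟩ := hα
  obtain ⟨c₀, -, -⟩ := hcover a₀
  suffices ∀ s : Finset γ, ∃ σ : SimpleFunc α γ, ∀ a, (∃ c ∈ s, a ∈ U c) → a ∈ U (σ a) by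
    obtain ⟨σ, hσ⟩ := this t
    exact ⟨σ, fun a => hσ a (hcover a)⟩
  intro s
  induction s using Finset.induction_on with
  | empty => exact ⟨const α c₀, by simp⟩
  | insert c s _ ih =>
    obtain ⟨σ, hσ⟩ := ih
    refine ⟨piecewise (U c) (hU c) (const α c) σ, fun a ha => ?_⟩
    by_cases hac : a ∈ U c
    · simp [piecewise_apply, hac]
    · obtain ⟨c', hc', hac'⟩ := ha
      have hc's : c' ∈ s :=
        (Finset.mem_insert.1 hc').resolve_left (by rintro rfl; exact hac hac')
      simpa [piecewise_apply, hac] using hσ a ⟨c', hc's, hac'⟩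

theorem enorm_integral_sub_integral_le {E : Type*} [NormedAddCommGroup E] [NormedSpace ℝ E]
    {g h : α → E} (hg : AEStronglyMeasurable g μ) (hh : Integrable h μ) :
    ‖∫ a, g a ∂μ - ∫ a, h a ∂μ‖ₑ ≤ ∫⁻ a, ‖g a - h a‖ₑ ∂μ := by
  by_cases hgi : Integrable g μ
  · rw [← integral_sub hgi hh]
    exact enorm_integral_le_lintegral_enorm _
  · suffices ∫⁻ a, ‖g a - h a‖ₑ ∂μ = ∞ by simp [this]
    by_contra hfin
    have hgh : Integrable (g - h) μ := ⟨hg.sub hh.1, lt_top_iff_ne_top.2 hfin⟩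
    exact hgi (by simpa using hgh.add hh)

section CompactOperator

variable [MeasurableSpace β] {ν : Measure β}

theorem SimpleFunc.integral_comp_mul (σ : SimpleFunc β γ) (φ : γ → ℝ) {f : β → ℝ}
    (hf : Integrable f ν) :
    ∫ y, φ (σ y) * f y ∂ν = ∑ c ∈ σ.range, φ c * ∫ y in σ ⁻¹' {c}, f y ∂ν := by
  have hfibers : ⋃ c ∈ σ.range, σ ⁻¹' {c} = univ := by
    ext y; simp
  have hint : Integrable (fun y => φ (σ y) * f y) ν := hf.simpleFunc_mul (σ.map φ)
  rw [← setIntegral_univ, ← hfibers,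
    integral_biUnion_finset _ (fun c _ => σ.measurableSet_fiber c)
      (fun c _ c' _ hcc' => Disjoint.preimage _ (disjoint_singleton.2 hcc'))
      (fun c _ => hint.integrableOn)]
  refine Finset.sum_congr rfl fun c _ => ?_
  rw [← integral_const_mul]
  exact setIntegral_congr_fun (σ.measurableSet_fiber c) fun y hy => by rw [show σ y = c from hy]

noncomputable def L1.setIntegralCLM {E : Type*} [NormedAddCommGroup E] [NormedSpace ℝ E]
    [CompleteSpace E] (s : Set α) : (α →₁[μ] E) →L[ℝ] E :=
  L1.integralCLM.comp (LpToLpRestrictCLM α E ℝ μ 1 s)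

theorem L1.setIntegralCLM_apply {E : Type*} [NormedAddCommGroup E] [NormedSpace ℝ E]
    [CompleteSpace E] (s : Set α) (f : α →₁[μ] E) :
    L1.setIntegralCLM s f = ∫ x in s, f x ∂μ := by
  rw [setIntegralCLM, ContinuousLinearMap.comp_apply, ← L1.integral_eq, L1.integral_eq_integral]
  exact integral_congr_ae (LpToLpRestrictCLM_coeFn ℝ s f)

variable {F : Type*} [NormedAddCommGroup F] [NormedSpace ℝ F]

noncomputable def SimpleFunc.sumSetIntegralSMul (σ : SimpleFunc β γ) (g : γ → F) :
    (β →₁[ν] ℝ) →L[ℝ] F :=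
  ∑ c ∈ σ.range,
    (ContinuousLinearMap.toSpanSingleton ℝ (g c)).comp (L1.setIntegralCLM (σ ⁻¹' {c}))

theorem SimpleFunc.sumSetIntegralSMul_apply (σ : SimpleFunc β γ) (g : γ → F) (f : β →₁[ν] ℝ) :
    σ.sumSetIntegralSMul g f = ∑ c ∈ σ.range, (∫ y in σ ⁻¹' {c}, f y ∂ν) • g c := by
  simp [sumSetIntegralSMul, L1.setIntegralCLM_apply]

theorem SimpleFunc.isCompactOperator_sumSetIntegralSMul (σ : SimpleFunc β γ) (g : γ → F) :
    IsCompactOperator (σ.sumSetIntegralSMul (ν := ν) g) :=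
  Submodule.sum_mem (compactOperator (RingHom.id ℝ) _ _) fun c _ =>
    (isCompactOperator_of_locallyCompactSpace_rng
      (ContinuousLinearMap.toSpanSingleton ℝ (g c))).comp_clm (L1.setIntegralCLM (σ ⁻¹' {c}))

end CompactOperator

section IntegralOperator

variable [MeasurableSpace β] {ν : Measure β}

theorem lintegral_enorm_integral_sub_integral_le [SFinite μ] [SFinite ν] {K L : α → β → ℝ}
    (hK : AEStronglyMeasurable (uncurry K) (μ.prod ν))
    (hL : AEStronglyMeasurable (uncurry L) (μ.prod ν)) (hLi : ∀ᵐ x ∂μ, Integrable (L x) ν) :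
    ∫⁻ x, ‖∫ y, K x y ∂ν - ∫ y, L x y ∂ν‖ₑ ∂μ ≤ ∫⁻ y, ∫⁻ x, ‖K x y - L x y‖ₑ ∂μ ∂ν := calc
  _ ≤ ∫⁻ x, ∫⁻ y, ‖K x y - L x y‖ₑ ∂ν ∂μ := by
    refine lintegral_mono_ae ?_
    filter_upwards [hK.prodMk_left, hLi] with x hKx hLx
    exact enorm_integral_sub_integral_le hKx hLx
  _ = _ := lintegral_lintegral_swap (hK.sub hL).aemeasurable.enorm

theorem L1.edist_le_lintegral_of_ae_eq_integral {K L : α → β → ℝ}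
    (hK : Measurable (uncurry K)) (hL : Measurable (uncurry L)) (f : β →₁[ν] ℝ)
    (hLi : ∀ x, Integrable (fun y => L x y * f y) ν) {u v : α →₁[μ] ℝ}
    (hu : u =ᵐ[μ] fun x => ∫ y, K x y * f y ∂ν) (hv : v =ᵐ[μ] fun x => ∫ y, L x y * f y ∂ν) :
    edist u v ≤ ∫⁻ y, (∫⁻ x, ‖K x y - L x y‖ₑ ∂μ) * ‖f y‖ₑ ∂ν := by
  have hf := (L1.integrable_coeFn f).aefinStronglyMeasurable
  have huv := ((L1.integrable_coeFn u).sub (L1.integrable_coeFn v)).aefinStronglyMeasurable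
  set F := hf.sigmaFiniteSet
  set G := huv.sigmaFiniteSet
  have hF (M : α → β → ℝ) (x : α) : ∫ y, M x y * f y ∂ν = ∫ y in F, M x y * f y ∂ν := by
    refine (setIntegral_eq_integral_of_ae_compl_eq_zero ?_).symm
    filter_upwards [(ae_restrict_iff' hf.measurableSet.compl).1 hf.ae_eq_zero_compl]
      with y hy hyF
    simp [hy hyF]
  have hG : ∫⁻ x, ‖u x - v x‖ₑ ∂μ = ∫⁻ x in G, ‖u x - v x‖ₑ ∂μ := by
    have hGc : ∫⁻ x in Gᶜ, ‖u x - v x‖ₑ ∂μ = 0 := by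
      refine (lintegral_congr_ae ?_).trans lintegral_zero
      filter_upwards [huv.ae_eq_zero_compl] with x hx
      simpa using hx
    rw [← lintegral_add_compl _ huv.measurableSet, hGc, add_zero]
  have hfsnd {m : Measure α} :
      AEStronglyMeasurable (fun p : α × β => f p.2) (m.prod (ν.restrict F)) :=
    (Lp.aestronglyMeasurable f).restrict.comp_quasiMeasurePreserving
      Measure.quasiMeasurePreserving_snd
  calc edist u v = ∫⁻ x, ‖u x - v x‖ₑ ∂μ := by
        rw [Lp.edist_def, eLpNorm_one_eq_lintegral_enorm]; rfl
  _ = ∫⁻ x in G, ‖∫ y in F, K x y * f y ∂ν - ∫ y in F, L x y * f y ∂ν‖ₑ ∂μ := by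
        rw [hG]
        refine lintegral_congr_ae ?_
        filter_upwards [ae_restrict_of_ae hu, ae_restrict_of_ae hv] with x hux hvx
        rw [hux, hvx, hF, hF]
  _ ≤ ∫⁻ y in F, ∫⁻ x in G, ‖K x y * f y - L x y * f y‖ₑ ∂μ ∂ν :=
        lintegral_enorm_integral_sub_integral_le (hK.aestronglyMeasurable.mul hfsnd)
          (hL.aestronglyMeasurable.mul hfsnd) (ae_of_all _ fun x => (hLi x).restrict)
  _ ≤ ∫⁻ y, ∫⁻ x, ‖K x y * f y - L x y * f y‖ₑ ∂μ ∂ν :=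
        lintegral_mono' Measure.restrict_le_self fun y =>
          lintegral_mono' Measure.restrict_le_self le_rfl
  _ = ∫⁻ y, (∫⁻ x, ‖K x y - L x y‖ₑ ∂μ) * ‖f y‖ₑ ∂ν := by
        refine lintegral_congr fun y => ?_
        rw [← lintegral_mul_const' _ _ enorm_ne_top]
        simp only [← sub_mul, enorm_mul]

end IntegralOperator

section Kernel

variable {k : α → β → ℝ} (hky : ∀ y, MemLp (fun x => k x y) 1 μ)

noncomputable def kernelSlice (y : β) : α →₁[μ] ℝ := (hky y).toLp fun x => k x y

theorem edist_kernelSlice (y z : β) :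
    edist (kernelSlice hky y) (kernelSlice hky z) = ∫⁻ x, ‖k x y - k x z‖ₑ ∂μ := by
  rw [kernelSlice, kernelSlice, Lp.edist_toLp_toLp, eLpNorm_one_eq_lintegral_enorm]; rfl

variable [MeasurableSpace β] {ν : Measure β}

theorem measurable_edist_kernelSlice (hk : Measurable (uncurry k)) {t : Set α}
    (ht : MeasurableSet t) [SFinite (μ.restrict t)]
    (hcarrier : ∀ y, (kernelSlice hky y : α → ℝ) =ᵐ[μ.restrict tᶜ] 0) (z : β) :
    Measurable fun y => edist (kernelSlice hky y) (kernelSlice hky z) := by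
  have hvanish (y : β) : (fun x => k x y) =ᵐ[μ.restrict tᶜ] 0 :=
    (EventuallyEq.symm (ae_restrict_of_ae (hky y).coeFn_toLp)).trans (hcarrier y)
  have hrestrict (y : β) :
      ∫⁻ x, ‖k x y - k x z‖ₑ ∂μ = ∫⁻ x in t, ‖k x y - k x z‖ₑ ∂μ := by
    have htc : ∫⁻ x in tᶜ, ‖k x y - k x z‖ₑ ∂μ = 0 := by
      refine (lintegral_congr_ae ?_).trans lintegral_zero
      filter_upwards [hvanish y, hvanish z] with x hy hz
      simp [hy, hz]
    rw [← lintegral_add_compl _ ht, htc, add_zero]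
  simp_rw [edist_kernelSlice, hrestrict]
  exact Measurable.lintegral_prod_right'
    ((hk.comp measurable_swap).sub (hk.comp (measurable_snd.prodMk measurable_const))).enorm

theorem exists_simpleFunc_edist_kernelSlice_lt (hk : Measurable (uncurry k))
    (hcpt : IsCompact (closure (range (kernelSlice hky)))) {ε : ℝ≥0∞} (hε : 0 < ε) :
    ∃ σ : SimpleFunc β β, ∀ y, edist (kernelSlice hky y) (kernelSlice hky (σ y)) < ε := by
  obtain ⟨t, ht, htfin, hcarrier⟩ :=
    Lp.exists_sFinite_carrier_of_isSeparable one_ne_top (hcpt.isSeparable.mono subset_closure)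
  obtain ⟨s, hs⟩ := hcpt.elim_finite_subcover (fun z => Metric.eball (kernelSlice hky z) ε)
    (fun _ => Metric.isOpen_eball) fun g hg => by
      obtain ⟨-, ⟨z, rfl⟩, hz⟩ := EMetric.mem_closure_iff.1 hg ε hε
      exact mem_iUnion.2 ⟨z, hz⟩
  refine SimpleFunc.exists_forall_mem_of_finset_cover
    (U := fun z => {y | edist (kernelSlice hky y) (kernelSlice hky z) < ε})
    (fun z => measurable_edist_kernelSlice hky hk ht (fun y => hcarrier _ ⟨y, rfl⟩) z
      measurableSet_Iio) s fun y => ?_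
  simpa [Metric.mem_eball] using hs (subset_closure ⟨y, rfl⟩)

theorem sumSetIntegralSMul_kernelSlice_ae_eq (σ : SimpleFunc β β) (f : β →₁[ν] ℝ) :
    σ.sumSetIntegralSMul (kernelSlice hky) f =ᵐ[μ] fun x => ∫ y, k x (σ y) * f y ∂ν := by
  rw [SimpleFunc.sumSetIntegralSMul_apply]
  filter_upwards [Lp.coeFn_finset_sum σ.range
      fun c => (∫ y in σ ⁻¹' {c}, f y ∂ν) • kernelSlice hky c,
    (eventually_all_finset σ.range).2 fun c _ => Lp.coeFn_smul (∫ y in σ ⁻¹' {c}, f y ∂ν)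
      (kernelSlice hky c),
    (eventually_all_finset σ.range).2 fun c _ => (hky c).coeFn_toLp] with x hsum hsmul hslice
  rw [hsum, Finset.sum_apply, σ.integral_comp_mul (k x) (L1.integrable_coeFn f)]
  refine Finset.sum_congr rfl fun c hc => ?_
  rw [hsmul c hc, Pi.smul_apply, kernelSlice, hslice c hc, smul_eq_mul, mul_comm]

theorem opNorm_sub_sumSetIntegralSMul_kernelSlice_le (hk : Measurable (uncurry k))
    (T : (β →₁[ν] ℝ) →L[ℝ] α →₁[μ] ℝ)
    (hT : ∀ f : β →₁[ν] ℝ, T f =ᵐ[μ] fun x => ∫ y, k x y * f y ∂ν) (σ : SimpleFunc β β)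
    {ε : ℝ} (hε : 0 ≤ ε)
    (hσ : ∀ y, edist (kernelSlice hky y) (kernelSlice hky (σ y)) ≤ ENNReal.ofReal ε) :
    ‖T - σ.sumSetIntegralSMul (kernelSlice hky)‖ ≤ ε := by
  refine ContinuousLinearMap.opNorm_le_bound _ hε fun f => ?_
  set S := σ.sumSetIntegralSMul (kernelSlice hky)
  have hkσ : Measurable (uncurry fun x y => k x (σ y)) :=
    hk.comp (measurable_fst.prodMk (σ.measurable.comp measurable_snd))
  have hedist : edist (T f) (S f) ≤ ENNReal.ofReal ε * ‖f‖ₑ := calc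
    _ ≤ ∫⁻ y, (∫⁻ x, ‖k x y - k x (σ y)‖ₑ ∂μ) * ‖f y‖ₑ ∂ν :=
      L1.edist_le_lintegral_of_ae_eq_integral hk hkσ f
        (fun x => (L1.integrable_coeFn f).simpleFunc_mul (σ.map (k x))) (hT f)
        (sumSetIntegralSMul_kernelSlice_ae_eq hky σ f)
    _ ≤ ∫⁻ y, ENNReal.ofReal ε * ‖f y‖ₑ ∂ν := lintegral_mono fun y => by
      rw [← edist_kernelSlice]
      gcongr
      exact hσ y
    _ = ENNReal.ofReal ε * ‖f‖ₑ := by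
      rw [lintegral_const_mul' _ _ ofReal_ne_top, Lp.enorm_def, eLpNorm_one_eq_lintegral_enorm]
  rw [sub_apply, ← dist_eq_norm]
  calc dist (T f) (S f) = (edist (T f) (S f)).toReal := dist_edist _ _
  _ ≤ (ENNReal.ofReal ε * ‖f‖ₑ).toReal := toReal_mono (by finiteness) hedist
  _ = ε * ‖f‖ := by rw [toReal_mul, toReal_ofReal hε, toReal_enorm]

end Kernel

end MeasureTheory

theorem stmt10_general {X : Type*} [MeasurableSpace X] (μ : Measure X)
    (k : X → X → ℝ) (hk : Measurable (Function.uncurry k))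
    (hky : ∀ y : X, MemLp (fun x => k x y) 1 μ)
    (hcpt : IsCompact (closure {g : Lp ℝ 1 μ | ∃ y : X, (hky y).toLp (fun x => k x y) = g}))
    (T : Lp ℝ 1 μ →L[ℝ] Lp ℝ 1 μ)
    (hT : ∀ f : Lp ℝ 1 μ, (T f : X → ℝ) =ᵐ[μ] fun x => ∫ y, k x y * f y ∂μ) :
    IsCompactOperator T := by
  refine isClosed_setOfPred_isCompactOperator.closure_subset
    (Metric.mem_closure_iff.2 fun ε hε => ?_)
  obtain ⟨σ, hσ⟩ := exists_simpleFunc_edist_kernelSlice_lt hky hk hcpt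
    (ENNReal.ofReal_pos.2 (half_pos hε))
  refine ⟨_, σ.isCompactOperator_sumSetIntegralSMul (kernelSlice hky), ?_⟩
  rw [dist_eq_norm]
  exact (opNorm_sub_sumSetIntegralSMul_kernelSlice_le hky hk T hT σ (half_pos hε).le
    fun y => (hσ y).le).trans_lt (half_lt_self hε)

/-- Eveson's criterion: if the kernel slices k_y are uniformly integrable against μ
(y ↦ ∫|k(x,y)|dμ(x) essentially bounded) and {k_y : y ∈ X} is relatively compact in
L¹(X,μ), then the integral operator Kf(x) = ∫ k(x,y)f(y) dμ(y) is compact on L¹. -/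
theorem stmt10 {X : Type*} [MeasurableSpace X] (μ : Measure X)
    (k : X → X → ℝ) (hk : Measurable (Function.uncurry k))
    (hky : ∀ y : X, MemLp (fun x => k x y) 1 μ)
    (M : ℝ) (hM : ∀ᵐ y ∂μ, ∫ x, |k x y| ∂μ ≤ M)
    (hcpt : IsCompact (closure {g : Lp ℝ 1 μ | ∃ y : X, (hky y).toLp (fun x => k x y) = g}))
    (T : Lp ℝ 1 μ →L[ℝ] Lp ℝ 1 μ)
    (hT : ∀ f : Lp ℝ 1 μ, (T f : X → ℝ) =ᵐ[μ] fun x => ∫ y, k x y * f y ∂μ) :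
    IsCompactOperator T :=
  stmt10_general μ k hk hky hcpt T hT
end

section
/- Let A be a bounded linear operator on L¹(X,μ) for a finite measure μ, and suppose there is ε > 0 such that for every p ∈ [1, ∞), A maps Lᵖ(X,μ) boundedly into L^{p+ε}(X,μ). If f ∈ L¹(X,μ) satisfies Af = f, then f ∈ Lᵖ(X,μ) for every p < ∞; in particular f ∈ L²(X,μ). -/
open MeasureTheory ENNReal

section

variable {X E : Type*} [MeasurableSpace X] [NormedAddCommGroup E] {μ : Measure X}
  {f : X → E} {p₀ ε : ℝ}

theorem memLp_add_nat_mul_of_memLp_imp_memLp_add (hε : 0 ≤ ε)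
    (hstep : ∀ p, p₀ ≤ p → MemLp f (ENNReal.ofReal p) μ →
      MemLp f (ENNReal.ofReal (p + ε)) μ)
    (hf : MemLp f (ENNReal.ofReal p₀) μ) (n : ℕ) :
    MemLp f (ENNReal.ofReal (p₀ + n * ε)) μ := by
  induction n with
  | zero => simpa using hf
  | succ n ih =>
    have hle : p₀ ≤ p₀ + n * ε := le_add_of_nonneg_right (by positivity)
    have hexp : p₀ + n * ε + ε = p₀ + (n + 1 : ℕ) * ε := by push_cast; ring
    simpa only [hexp] using hstep _ hle ih

theorem memLp_of_memLp_imp_memLp_add [IsFiniteMeasure μ] (hε : 0 < ε)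
    (hstep : ∀ p, p₀ ≤ p → MemLp f (ENNReal.ofReal p) μ →
      MemLp f (ENNReal.ofReal (p + ε)) μ)
    (hf : MemLp f (ENNReal.ofReal p₀) μ) (p : ℝ) : MemLp f (ENNReal.ofReal p) μ := by
  obtain ⟨n, hn⟩ := Archimedean.arch (p - p₀) hε
  have hle : p ≤ p₀ + n * ε := by
    rw [nsmul_eq_mul] at hn
    linarith
  exact (memLp_add_nat_mul_of_memLp_imp_memLp_add hε.le hstep hf n).mono_exponent
    (ENNReal.ofReal_le_ofReal hle)

end

theorem stmt14_general {X : Type*} [MeasurableSpace X] (μ : Measure X) [IsFiniteMeasure μ]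
    (A : (X → ℝ) → (X → ℝ))
    (ε : ℝ) (hε : 0 < ε)
    (hsmooth : ∀ p : ℝ, 1 ≤ p → ∀ f : X → ℝ, MemLp f (ENNReal.ofReal p) μ →
      MemLp (A f) (ENNReal.ofReal (p + ε)) μ)
    (f : X → ℝ) (hf : Integrable f μ) (hfix : A f = f) :
    (∀ p : ℝ, 1 ≤ p → MemLp f (ENNReal.ofReal p) μ) ∧ MemLp f 2 μ := by
  have hstep : ∀ p : ℝ, 1 ≤ p → MemLp f (ENNReal.ofReal p) μ →
      MemLp f (ENNReal.ofReal (p + ε)) μ :=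
    fun p hp hfp ↦ hfix ▸ hsmooth p hp f hfp
  have hf₁ : MemLp f (ENNReal.ofReal 1) μ := by
    rwa [ENNReal.ofReal_one, memLp_one_iff_integrable]
  have hmem := memLp_of_memLp_imp_memLp_add hε hstep hf₁
  exact ⟨fun p _ ↦ hmem p, by simpa using hmem 2⟩

/-- Bootstrapping: if A is bounded on L¹(X,μ) (μ finite) and improves integrability,
mapping Lᵖ into L^{p+ε} for every p ∈ [1,∞), then any fixed point f ∈ L¹ of A lies in
Lᵖ for every p < ∞; in particular f ∈ L². -/
theorem stmt14 {X : Type*} [MeasurableSpace X] (μ : Measure X) [IsFiniteMeasure μ]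
    (A : (X → ℝ) → (X → ℝ))
    (hbdd : ∃ C : ℝ, ∀ f : X → ℝ, Integrable f μ →
      Integrable (A f) μ ∧ ∫ x, |A f x| ∂μ ≤ C * ∫ x, |f x| ∂μ)
    (ε : ℝ) (hε : 0 < ε)
    (hsmooth : ∀ p : ℝ, 1 ≤ p → ∀ f : X → ℝ, MemLp f (ENNReal.ofReal p) μ →
      MemLp (A f) (ENNReal.ofReal (p + ε)) μ)
    (f : X → ℝ) (hf : Integrable f μ) (hfix : A f = f) :
    (∀ p : ℝ, 1 ≤ p → MemLp f (ENNReal.ofReal p) μ) ∧ MemLp f 2 μ :=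
  stmt14_general μ A ε hε hsmooth f hf hfix
end

section
/- Let (X, d, μ) be a space of homogeneous type with quasi-triangle constant c, and suppose g : X × X → ℂ satisfies: (i) |g(z,w)| ≈ |g(z,w')| whenever d(w,w') ≤ C·d(z,w) for a fixed constant C > 0, and (ii) |g(z,w) − g(z,w')| ≲ d(w,w')^{1/2} d(z,w)^{1/2} + d(w,w'), and (iii) d(w, bD) ≲ |g(z,w)| for all z, w (where d(w,bD) denotes a fixed 'distance to boundary' function satisfying d(w,bD) ≤ c·d(w,w') + c·d(w',bD)). Then there exists k > 0 such that |g(z,w)| ≈ |g(z,w')| for all z, w, w' with d(w,w') ≤ k·d(w,bD). -/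
/-!
Either `d w w' ≤ C * d z w`, where (i) applies directly, or `d z w < d w w' / C`; then (ii)
bounds `‖g z w - g z w'‖` by a multiple of `d w w' ≤ k * db w`, which by (iii) is a multiple
of `k * ‖g z w‖`. For `k` small this is at most `‖g z w‖ / 2`, and a perturbation of at most
half the norm changes the norm by a factor of at most two.
-/

lemma norm_le_two_mul_of_norm_sub_le_half {E : Type*} [SeminormedAddCommGroup E] {a b : E}
    (h : ‖a - b‖ ≤ ‖a‖ / 2) : ‖a‖ ≤ 2 * ‖b‖ ∧ ‖b‖ ≤ 2 * ‖a‖ := by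
  have hab := norm_sub_norm_le a b
  have hba := norm_sub_norm_le b a
  rw [norm_sub_rev] at hba
  have := norm_nonneg a
  constructor <;> linarith

lemma Real.sqrt_mul_sqrt_le_div_sqrt {a b C : ℝ} (ha : 0 ≤ a) (hC : 0 < C) (hb : C * b ≤ a) :
    √a * √b ≤ a / √C :=
  calc √a * √b ≤ √a * √(a / C) := by
        gcongr
        rwa [le_div_iff₀ hC, mul_comm]
    _ = a / √C := by rw [Real.sqrt_div ha, mul_div_assoc', Real.mul_self_sqrt ha]

theorem stmt16_general {X : Type*} (d : X → X → ℝ)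
    (hd0 : ∀ x y, 0 ≤ d x y)
    (db : X → ℝ)
    (g : X → X → ℂ)
    (C : ℝ) (hC : 0 < C) (A₁ : ℝ)
    (h1 : ∀ z w w' : X, d w w' ≤ C * d z w →
      ‖g z w‖ ≤ A₁ * ‖g z w'‖ ∧
      ‖g z w'‖ ≤ A₁ * ‖g z w‖)
    (A₂ : ℝ) (hA₂ : 0 < A₂)
    (h2 : ∀ z w w' : X, ‖g z w - g z w'‖ ≤
      A₂ * (Real.sqrt (d w w') * Real.sqrt (d z w) + d w w'))
    (A₃ : ℝ) (hA₃ : 0 < A₃)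
    (h3 : ∀ z w : X, db w ≤ A₃ * ‖g z w‖) :
    ∃ k : ℝ, 0 < k ∧ ∃ A : ℝ, 0 < A ∧ ∀ z w w' : X, d w w' ≤ k * db w →
      ‖g z w‖ ≤ A * ‖g z w'‖ ∧
      ‖g z w'‖ ≤ A * ‖g z w‖ := by
  set B := A₂ * (1 / √C + 1)
  have hB : 0 < B := by positivity
  refine ⟨1 / (2 * B * A₃), by positivity, max A₁ 2, lt_max_of_lt_right two_pos, ?_⟩
  intro z w w' hww'
  rcases le_or_gt (d w w') (C * d z w) with hnear | hfar
  · obtain ⟨hle, hge⟩ := h1 z w w' hnear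
    exact ⟨hle.trans (by gcongr; exact le_max_left _ _),
      hge.trans (by gcongr; exact le_max_left _ _)⟩
  have hdiff : ‖g z w - g z w'‖ ≤ ‖g z w‖ / 2 :=
    calc ‖g z w - g z w'‖ ≤ A₂ * (d w w' / √C + d w w') := by
          refine (h2 z w w').trans ?_
          gcongr
          exact Real.sqrt_mul_sqrt_le_div_sqrt (hd0 w w') hC hfar.le
      _ = B * d w w' := by ring
      _ ≤ B * (1 / (2 * B * A₃) * (A₃ * ‖g z w‖)) := by
          gcongr
          exact hww'.trans (by gcongr; exact h3 z w)
      _ = ‖g z w‖ / 2 := by field_simp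
  obtain ⟨hle, hge⟩ := norm_le_two_mul_of_norm_sub_le_half hdiff
  exact ⟨hle.trans (by gcongr; exact le_max_right _ _),
    hge.trans (by gcongr; exact le_max_right _ _)⟩

/-- The kernel denominator g(z,w) is essentially constant when w moves within a small
quasi-ball of radius proportional to its distance to the boundary. -/
theorem stmt16 {X : Type*} (d : X → X → ℝ) (c : ℝ) (hc : 1 ≤ c)
    (hd0 : ∀ x y, 0 ≤ d x y) (hsymm : ∀ x y, d x y = d y x)
    (htri : ∀ x y z, d x z ≤ c * d x y + c * d y z)
    (db : X → ℝ) (hdb0 : ∀ x, 0 ≤ db x)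
    (hdbtri : ∀ w w' : X, db w ≤ c * d w w' + c * db w')
    (g : X → X → ℂ)
    (C : ℝ) (hC : 0 < C) (A₁ : ℝ) (hA₁ : 0 < A₁)
    (h1 : ∀ z w w' : X, d w w' ≤ C * d z w →
      ‖g z w‖ ≤ A₁ * ‖g z w'‖ ∧
      ‖g z w'‖ ≤ A₁ * ‖g z w‖)
    (A₂ : ℝ) (hA₂ : 0 < A₂)
    (h2 : ∀ z w w' : X, ‖g z w - g z w'‖ ≤
      A₂ * (Real.sqrt (d w w') * Real.sqrt (d z w) + d w w'))
    (A₃ : ℝ) (hA₃ : 0 < A₃)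
    (h3 : ∀ z w : X, db w ≤ A₃ * ‖g z w‖) :
    ∃ k : ℝ, 0 < k ∧ ∃ A : ℝ, 0 < A ∧ ∀ z w w' : X, d w w' ≤ k * db w →
      ‖g z w‖ ≤ A * ‖g z w'‖ ∧
      ‖g z w'‖ ≤ A * ‖g z w‖ :=
  stmt16_general d hd0 db g C hC A₁ h1 A₂ hA₂ h2 A₃ hA₃ h3
end
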